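/- Let Y be a real-valued random variable on a probability space whose law is gaussianReal δ v with v ≠ 0, and let B = sgn ∘ Y be its binarization. Then H[B] ≤ log 2, and H[B] = log 2 if and only if δ = 0. (The information entropy of the binarized average-pooled Gaussian feature is maximized exactly at offset δ = 0, which is the EMA-avg optimum.) -/

import Mathlib

/-!
The sign of `Y` is a Bernoulli variable with success probability `f δ = P(Y ≥ 0)`, so its entropy
is `binEntropy (f δ)`, which is at most `log 2` with equality exactly at `f δ = 1/2`. Since the law
has no atoms, reflecting `Y ↦ -Y` gives `f δ + f (-δ) = 1`, and `f` is strictly increasing because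
the Gaussian charges every interval. Hence `f δ = 1/2 ↔ f δ = f (-δ) ↔ δ = 0`.
-/

open MeasureTheory ProbabilityTheory
open scoped NNReal

/-- The binarization (sign) function: `sgn x = 1` if `x ≥ 0`, else `−1`. -/
noncomputable def sgn (x : ℝ) : ℝ := if 0 ≤ x then 1 else -1

/-- Shannon entropy (natural logarithm) of a random variable `X`:
`H[X] = −∑_x P(X = x)·log P(X = x)`. -/
noncomputable def shannonEntropy {Ω S : Type*} [MeasurableSpace Ω]
    (μ : Measure Ω) (X : Ω → S) : ℝ :=
  -∑' s : S, (μ (X ⁻¹' {s})).toReal * Real.log (μ (X ⁻¹' {s})).toReal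

open Set

lemma shannonEntropy_eq_binEntropy {Ω S : Type*} [MeasurableSpace Ω] {μ : Measure Ω}
    [IsProbabilityMeasure μ] {X : Ω → S} {a b : S} (hab : a ≠ b)
    (hX : ∀ ω, X ω = a ∨ X ω = b) (ha : MeasurableSet (X ⁻¹' {a})) :
    shannonEntropy μ X = Real.binEntropy (μ.real (X ⁻¹' {a})) := by
  classical
  have hb : X ⁻¹' {b} = (X ⁻¹' {a})ᶜ := by
    ext ω
    rcases hX ω with h | h <;> simp [h, hab, hab.symm]
  have hsupp : ∀ s ∉ ({a, b} : Finset S),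
      (μ (X ⁻¹' {s})).toReal * Real.log (μ (X ⁻¹' {s})).toReal = 0 := by
    intro s hs
    have hempty : X ⁻¹' {s} = ∅ := by
      ext ω
      rcases hX ω with h | h <;> simp_all [eq_comm]
    simp [hempty]
  rw [shannonEntropy, tsum_eq_sum hsupp, Finset.sum_pair hab, ← measureReal_def,
    ← measureReal_def, hb, probReal_compl_eq_one_sub ha, Real.binEntropy, Real.log_inv,
    Real.log_inv]
  ring

lemma sgn_eq_one_or_eq_neg_one (x : ℝ) : sgn x = 1 ∨ sgn x = -1 := by
  unfold sgn
  split_ifs <;> simp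

lemma sgn_preimage_one : sgn ⁻¹' {1} = Ici 0 := by
  ext x
  by_cases hx : 0 ≤ x <;> norm_num [sgn, hx]

lemma strictAnti_measureReal_Ici {μ : Measure ℝ} [IsFiniteMeasure μ] (hμ : volume ≪ μ) :
    StrictAnti fun t ↦ μ.real (Ici t) := by
  intro s t hst
  have hgap : 0 < μ.real (Ico s t) := by
    refine ENNReal.toReal_pos (fun h ↦ ?_) (measure_ne_top μ _)
    exact absurd (hμ h) (by simp [hst])
  have hsplit := measureReal_sdiff (μ := μ) (Ici_subset_Ici.mpr hst.le) measurableSet_Ici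
  rw [Ici_sdiff_Ici] at hsplit
  dsimp only
  linarith

section Gaussian

variable {v : ℝ≥0}

lemma gaussianReal_real_Ici_zero (δ : ℝ) :
    (gaussianReal δ v).real (Ici 0) = (gaussianReal 0 v).real (Ici (-δ)) := by
  have hshift := gaussianReal_map_add_const (μ := 0) (v := v) δ
  rw [zero_add] at hshift
  rw [← hshift, map_measureReal_apply (by fun_prop) measurableSet_Ici]
  congr 1
  ext x
  simp [neg_le_iff_add_nonneg]

lemma strictMono_gaussianReal_real_Ici_zero (hv : v ≠ 0) :
    StrictMono fun δ : ℝ ↦ (gaussianReal δ v).real (Ici 0) := by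
  simp only [gaussianReal_real_Ici_zero]
  exact (strictAnti_measureReal_Ici (gaussianReal_absolutelyContinuous' 0 hv)).comp
    (fun _ _ h ↦ neg_lt_neg h : StrictAnti (fun δ : ℝ ↦ -δ))

lemma gaussianReal_real_Ici_zero_add_neg (hv : v ≠ 0) (δ : ℝ) :
    (gaussianReal δ v).real (Ici 0) + (gaussianReal (-δ) v).real (Ici 0) = 1 := by
  have := nullSingletonClass_gaussianReal (μ := δ) hv
  have hreflect : (gaussianReal (-δ) v).real (Ici 0) = (gaussianReal δ v).real (Iio 0) := by
    rw [← gaussianReal_map_neg, map_measureReal_apply (by fun_prop) measurableSet_Ici,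
      measureReal_congr Iio_ae_eq_Iic]
    congr 1
    ext x
    simp
  rw [hreflect, ← compl_Ici, probReal_compl_eq_one_sub measurableSet_Ici]
  ring

lemma gaussianReal_real_Ici_zero_eq_half_iff (hv : v ≠ 0) (δ : ℝ) :
    (gaussianReal δ v).real (Ici 0) = 2⁻¹ ↔ δ = 0 := by
  have hsum := gaussianReal_real_Ici_zero_add_neg hv δ
  calc (gaussianReal δ v).real (Ici 0) = 2⁻¹
      ↔ (gaussianReal δ v).real (Ici 0) = (gaussianReal (-δ) v).real (Ici 0) := by
        constructor <;> intro h <;> linarith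
    _ ↔ δ = -δ := (strictMono_gaussianReal_real_Ici_zero hv).injective.eq_iff
    _ ↔ δ = 0 := by constructor <;> intro h <;> linarith

end Gaussian

/-- If `Y` has law `gaussianReal δ v` with `v ≠ 0` and `B = sgn ∘ Y`, then `H[B] ≤ log 2`
with equality iff `δ = 0`. -/
theorem entropy_sgn_gaussian_le_log_two_iff
    {Ω : Type*} [MeasurableSpace Ω] (μ : Measure Ω) [IsProbabilityMeasure μ]
    (Y : Ω → ℝ) (hY : Measurable Y) (δ : ℝ) (v : ℝ≥0) (hv : v ≠ 0)
    (hlaw : Measure.map Y μ = gaussianReal δ v) :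
    shannonEntropy μ (sgn ∘ Y) ≤ Real.log 2 ∧
      (shannonEntropy μ (sgn ∘ Y) = Real.log 2 ↔ δ = 0) := by
  have hpre : (sgn ∘ Y) ⁻¹' {1} = Y ⁻¹' Ici 0 := by
    rw [preimage_comp, sgn_preimage_one]
  have hent : shannonEntropy μ (sgn ∘ Y) = Real.binEntropy ((gaussianReal δ v).real (Ici 0)) := by
    rw [shannonEntropy_eq_binEntropy (X := sgn ∘ Y) (b := -1) (by norm_num)
        (fun ω ↦ sgn_eq_one_or_eq_neg_one (Y ω)) (hpre ▸ hY measurableSet_Ici), hpre, ← hlaw, map_measureReal_apply hY measurableSet_Ici]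
  rw [hent, Real.binEntropy_eq_log_two, gaussianReal_real_Ici_zero_eq_half_iff hv]
  exact ⟨Real.binEntropy_le_log_two, Iff.rfl⟩
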